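/- arXiv:2602.15240 — 2 statements merged into one kernel-verified Lean document; each statement's English description precedes it below -/
import Mathlib

section
/- Let Ω ⊂ ℂⁿ be a bounded open set and E_h ⊂ Ω a hermitian ellipsoid of maximal volume among hermitian ellipsoids centered at 0 contained in Ω. Then for every linear operator T on ℂⁿ, Re(tr T)/n ≤ max{Re h(Tz,z) : z ∈ ∂Ω ∩ ∂E_h}. -/
open Complex MeasureTheory Bornology

/-- A positive definite hermitian form on `ℂⁿ` (linear in the first argument,
conjugate-linear in the second). -/
structure PosDefHermForm (n : ℕ) where
  form : (Fin n → ℂ) → (Fin n → ℂ) → ℂ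
  add_left : ∀ z z' w, form (z + z') w = form z w + form z' w
  smul_left : ∀ (a : ℂ) (z w : Fin n → ℂ), form (a • z) w = a * form z w
  conj_symm : ∀ z w, form z w = starRingEnd ℂ (form w z)
  posdef : ∀ z, z ≠ 0 → 0 < (form z z).re

/-- The hermitian ellipsoid `E_h = {z : h(z,z) < 1}`. -/
def PosDefHermForm.ball {n : ℕ} (h : PosDefHermForm n) : Set (Fin n → ℂ) :=
  {z | (h.form z z).re < 1}

/-- Plurisubharmonicity via the sub-mean-value inequality on complex lines
(the standard characterization for continuous functions). -/
def PlurisubharmonicOn {n : ℕ} (u : (Fin n → ℂ) → ℝ) (Ω : Set (Fin n → ℂ)) : Prop :=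
  ∀ (a b : Fin n → ℂ) (r : ℝ), 0 < r →
    (∀ lam : ℂ, ‖lam‖ ≤ r → a + lam • b ∈ Ω) →
    u a ≤ (2 * Real.pi)⁻¹ *
      ∫ t in (0:ℝ)..(2 * Real.pi), u (a + ((r : ℂ) * Complex.exp ((t : ℂ) * Complex.I)) • b)

/-- Pseudoconvexity: an open set admitting a continuous plurisubharmonic
exhaustion function. -/
def IsPseudoconvex {n : ℕ} (Ω : Set (Fin n → ℂ)) : Prop :=
  IsOpen Ω ∧ ∃ u : (Fin n → ℂ) → ℝ, ContinuousOn u Ω ∧ PlurisubharmonicOn u Ω ∧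
    ∀ c : ℝ, IsCompact {z | z ∈ Ω ∧ u z ≤ c}


/-!
If the inequality failed, then for `μ` strictly between the maximum of `Re h(Tz, z)` over the
compact contact set `∂Ω ∩ ∂E_h` and `Re(tr T)/n`, the operator `S = μ • id - T` has
`Re(tr S) < 0` while `Re h(Sz, z) > 0` at every contact point. For small `t > 0` the ellipsoid
`(id + t S)⁻¹(E_h)` still lies in `Ω`: near the contact points `id + t S` pushes outward, and
elsewhere compactness leaves a uniform margin. But its volume is `vol(E_h) / det_ℝ(id + t S)` and
`det_ℝ(id + t S) = 1 + 2t Re(tr S) + O(t²) < 1`, contradicting maximality.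
-/

open Filter Topology Pointwise

attribute [local instance] isModuleTopologyOfFiniteDimensional

theorem LinearMap.trace_restrictScalars {R A M : Type*} [Field R] [Field A] [Algebra R A]
    [FiniteDimensional R A] [AddCommGroup M] [Module R M] [Module A M] [IsScalarTower R A M]
    [FiniteDimensional A M] (f : M →ₗ[A] M) :
    trace R M (f.restrictScalars R) = Algebra.trace R A (trace A M f) := by
  classical
  let bA := Module.finBasis R A
  let bM := Module.finBasis A M
  rw [trace_eq_matrix_trace R (bA.smulTower' bM), restrictScalars_toMatrix,
    trace_eq_matrix_trace A bM, Matrix.trace, Fintype.sum_prod_type, Matrix.trace, map_sum]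
  refine Finset.sum_congr rfl fun i _ => ?_
  simp [Algebra.trace_eq_matrix_trace bA, Matrix.trace]

theorem LinearMap.hasDerivAt_det_id_add_smul {𝕜 M : Type*} [NontriviallyNormedField 𝕜]
    [AddCommGroup M] [Module 𝕜 M] [FiniteDimensional 𝕜 M] (f : M →ₗ[𝕜] M) :
    HasDerivAt (fun s : 𝕜 => LinearMap.det (LinearMap.id + s • f)) (trace 𝕜 M f) 0 := by
  classical
  let b := Module.finBasis 𝕜 M
  let N := toMatrix b b f
  have hpoly : (fun s : 𝕜 => LinearMap.det (LinearMap.id + s • f)) = fun s =>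
      ((1 : Polynomial 𝕜) + Polynomial.C (Matrix.trace N) * Polynomial.X
        + (Matrix.det (1 + (Polynomial.X : Polynomial 𝕜) • N.map Polynomial.C)).divX.divX
          * Polynomial.X ^ 2).eval s := by
    funext s
    rw [← det_toMatrix b, map_add, map_smul, toMatrix_id, Matrix.det_one_add_smul]
    simp [N]
  rw [hpoly, trace_eq_matrix_trace 𝕜 b]
  convert Polynomial.hasDerivAt _ (0 : 𝕜) using 1
  simp [Polynomial.derivative_mul, N]

theorem HasDerivAt.eventually_lt_of_neg {f : ℝ → ℝ} {f' x : ℝ} (hf : HasDerivAt f f' x)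
    (hf' : f' < 0) : ∀ᶠ t in 𝓝[>] 0, f (x + t) < f x := by
  filter_upwards [hf.tendsto_slope_zero_right.eventually_lt_const hf', self_mem_nhdsWithin]
    with t hslope (ht : 0 < t)
  rw [smul_eq_mul, inv_mul_lt_iff₀ ht, mul_zero, sub_neg] at hslope
  exact hslope

namespace PosDefHermForm

variable {n : ℕ} (h : PosDefHermForm n)

lemma add_right (z w w' : Fin n → ℂ) : h.form z (w + w') = h.form z w + h.form z w' := by
  rw [h.conj_symm, h.add_left, map_add, ← h.conj_symm, ← h.conj_symm]

lemma smul_right (a : ℂ) (z w : Fin n → ℂ) : h.form z (a • w) = starRingEnd ℂ a * h.form z w := by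
  rw [h.conj_symm, h.smul_left, map_mul, ← h.conj_symm]

noncomputable def reForm : (Fin n → ℂ) →ₗ[ℝ] (Fin n → ℂ) →ₗ[ℝ] ℝ :=
  LinearMap.mk₂ ℝ (fun z w => (h.form z w).re)
    (fun z z' w => by rw [h.add_left, add_re])
    (fun r z w => by rw [← Complex.coe_smul, h.smul_left, re_ofReal_mul, smul_eq_mul])
    (fun z w w' => by rw [h.add_right, add_re])
    (fun r z w => by rw [← Complex.coe_smul, h.smul_right, conj_ofReal, re_ofReal_mul, smul_eq_mul])

@[simp]
lemma reForm_apply (z w : Fin n → ℂ) : h.reForm z w = (h.form z w).re := rfl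

lemma reForm_comm (z w : Fin n → ℂ) : h.reForm z w = h.reForm w z := by
  rw [reForm_apply, h.conj_symm, conj_re, reForm_apply]

lemma reForm_self_pos {z : Fin n → ℂ} (hz : z ≠ 0) : 0 < h.reForm z z := h.posdef z hz

lemma reForm_self_nonneg (z : Fin n → ℂ) : 0 ≤ h.reForm z z := by
  rcases eq_or_ne z 0 with rfl | hz
  · simp
  · exact (h.reForm_self_pos hz).le

lemma reForm_add_smul_self (t : ℝ) (z w : Fin n → ℂ) :
    h.reForm (z + t • w) (z + t • w)
      = h.reForm z z + 2 * t * h.reForm w z + t ^ 2 * h.reForm w w := by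
  simp only [map_add, map_smul, LinearMap.add_apply, LinearMap.smul_apply, smul_eq_mul,
    h.reForm_comm z w]
  ring

lemma reForm_smul_smul (r : ℝ) (z w : Fin n → ℂ) :
    h.reForm (r • z) (r • w) = r ^ 2 * h.reForm z w := by
  simp only [map_smul, LinearMap.smul_apply, smul_eq_mul]
  ring

lemma continuous_reForm {α : Type*} [TopologicalSpace α] {f g : α → Fin n → ℂ}
    (hf : Continuous f) (hg : Continuous g) : Continuous fun x => h.reForm (f x) (g x) :=
  (IsModuleTopology.continuous_bilinear_of_finite_left h.reForm).comp (hf.prodMk hg)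

lemma continuous_reForm_self : Continuous fun z => h.reForm z z :=
  h.continuous_reForm continuous_id continuous_id

lemma exists_reForm_apply_le_mul (T : (Fin n → ℂ) →ₗ[ℂ] (Fin n → ℂ)) :
    ∃ M : ℝ, ∀ z, h.reForm (T z) z ≤ M * h.reForm z z := by
  have hpos : ∀ u ∈ Metric.sphere (0 : Fin n → ℂ) 1, h.reForm u u ≠ 0 := fun u hu =>
    (h.reForm_self_pos (ne_zero_of_mem_unit_sphere ⟨u, hu⟩)).ne'
  obtain ⟨M, hM⟩ := (isCompact_sphere (0 : Fin n → ℂ) 1).bddAbove_image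
    (f := fun u => h.reForm (T u) u / h.reForm u u)
    ((h.continuous_reForm T.continuous_of_finiteDimensional continuous_id).continuousOn.div
      h.continuous_reForm_self.continuousOn hpos)
  refine ⟨M, fun z => ?_⟩
  rcases eq_or_ne z 0 with rfl | hz
  · simp
  have hz' : ‖z‖ ≠ 0 := norm_ne_zero_iff.2 hz
  set u := ‖z‖⁻¹ • z
  have hu : u ∈ Metric.sphere (0 : Fin n → ℂ) 1 := by simp [u, norm_smul, hz']
  have hzu : z = ‖z‖ • u := by simp [u, smul_smul, hz']
  have hTu := (div_le_iff₀ (h.reForm_self_pos (ne_zero_of_mem_unit_sphere ⟨u, hu⟩))).1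
    (hM ⟨u, hu, rfl⟩)
  rw [hzu, T.map_smul_of_tower, h.reForm_smul_smul, h.reForm_smul_smul, mul_left_comm]
  exact mul_le_mul_of_nonneg_left hTu (sq_nonneg _)

lemma isOpen_ball : IsOpen h.ball :=
  isOpen_lt h.continuous_reForm_self continuous_const

lemma zero_mem_ball : 0 ∈ h.ball :=
  show h.reForm 0 0 < 1 by simp

lemma frontier_ball : frontier h.ball = {z | h.reForm z z = 1} := by
  refine (frontier_lt_subset_eq h.continuous_reForm_self continuous_const).antisymm
    fun z (hz : h.reForm z z = 1) => ?_
  have hlim : Tendsto (fun r : ℝ => r • z) (𝓝[<] 1) (𝓝 z) :=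
    ((continuous_id.smul continuous_const).tendsto' 1 z (one_smul ℝ z)).mono_left
      nhdsWithin_le_nhds
  show z ∈ frontier h.ball
  rw [frontier, h.isOpen_ball.interior_eq]
  refine ⟨mem_closure_of_tendsto hlim ?_, fun hz' => (hz' : h.reForm z z < 1).ne hz⟩
  filter_upwards [Ioo_mem_nhdsLT zero_lt_one] with r hr
  show h.reForm (r • z) (r • z) < 1
  rw [h.reForm_smul_smul, hz, mul_one]
  nlinarith [hr.1, hr.2]

def comp (A : (Fin n → ℂ) →ₗ[ℂ] (Fin n → ℂ)) (hA : Function.Injective A) : PosDefHermForm n where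
  form z w := h.form (A z) (A w)
  add_left z z' w := by rw [map_add, h.add_left]
  smul_left a z w := by rw [map_smul, h.smul_left]
  conj_symm z w := h.conj_symm _ _
  posdef z hz := h.posdef _ fun hAz => hz (hA (hAz.trans A.map_zero.symm))

lemma ball_comp (A : (Fin n → ℂ) →ₗ[ℂ] (Fin n → ℂ)) (hA : Function.Injective A) :
    (h.comp A hA).ball = A ⁻¹' h.ball := rfl

end PosDefHermForm

section MaximalEllipsoid

variable {n : ℕ} {Ω : Set (Fin n → ℂ)} {h : PosDefHermForm n}

theorem one_le_abs_det_of_preimage_ball_subset (hΩb : IsBounded Ω) (hsub : h.ball ⊆ Ω)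
    (hmax : ∀ k : PosDefHermForm n, k.ball ⊆ Ω → volume k.ball ≤ volume h.ball)
    {A : (Fin n → ℂ) →ₗ[ℂ] (Fin n → ℂ)} (hA : LinearMap.det (A.restrictScalars ℝ) ≠ 0)
    (hAΩ : A ⁻¹' h.ball ⊆ Ω) : 1 ≤ |LinearMap.det (A.restrictScalars ℝ)| := by
  have hinj : Function.Injective A :=
    ((Module.End.isUnit_iff _).1 ((LinearMap.isUnit_iff_isUnit_det _).2 hA.isUnit)).1
  have hvol := hmax (h.comp A hinj) hAΩ
  rw [h.ball_comp, ← A.coe_restrictScalars ℝ, Measure.addHaar_preimage_linearMap volume hA]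
    at hvol
  have h0 : volume h.ball ≠ 0 := (h.isOpen_ball.measure_pos volume ⟨0, h.zero_mem_ball⟩).ne'
  have htop : volume h.ball ≠ ⊤ := (hΩb.subset hsub).measure_lt_top.ne
  have := (ENNReal.mul_le_mul_iff_left h0 htop).1 (hvol.trans_eq (one_mul _).symm)
  rw [ENNReal.ofReal_le_one, abs_inv] at this
  exact (inv_le_one₀ (abs_pos.2 hA)).1 this

theorem exists_forall_notMem_one_add_le_reForm (hΩo : IsOpen Ω) (hΩb : IsBounded Ω)
    (hsub : h.ball ⊆ Ω) {b : (Fin n → ℂ) → ℝ} (hb : Continuous b)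
    (hbS : ∀ z ∈ frontier Ω ∩ frontier h.ball, 0 < b z) :
    ∃ ε > 0, ∀ z ∉ Ω, b z ≤ 0 → 1 + ε ≤ h.reForm z z := by
  have hout : ∀ z ∉ Ω, 1 ≤ h.reForm z z := fun z hz => not_lt.1 fun hlt => hz (hsub hlt)
  -- Cutting by `2 • h.ball` makes `K` compact; outside it `h.reForm z z ≥ 4` anyway.
  set K := Ωᶜ ∩ {z | b z ≤ 0} ∩ closure ((2 : ℝ) • h.ball)
  have hK : IsCompact K := Metric.isCompact_of_isClosed_isBounded
    ((hΩo.isClosed_compl.inter (isClosed_le hb continuous_const)).inter isClosed_closure)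
    (((hΩb.subset hsub).smul₀ 2).closure.subset Set.inter_subset_right)
  have hKgt : ∀ z ∈ K, 1 < h.reForm z z := by
    rintro z ⟨⟨hzΩ, hbz⟩, -⟩
    refine (hout z hzΩ).lt_of_ne fun hq => (hbS z ?_).not_ge hbz
    have hzb : z ∈ frontier h.ball := by rw [h.frontier_ball]; exact hq.symm
    refine ⟨?_, hzb⟩
    rw [frontier, hΩo.interior_eq]
    exact ⟨closure_mono hsub (frontier_subset_closure hzb), hzΩ⟩
  obtain ⟨a, ha1, ha⟩ := hK.exists_forall_le' h.continuous_reForm_self.continuousOn hKgt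
  refine ⟨min (a - 1) 3, lt_min (by linarith) (by norm_num), fun z hzΩ hbz => ?_⟩
  by_cases hq : h.reForm z z < 4
  · have hz2 : z ∈ (2 : ℝ) • h.ball := by
      rw [Set.mem_smul_set_iff_inv_smul_mem₀ two_ne_zero]
      show h.reForm (2⁻¹ • z) (2⁻¹ • z) < 1
      rw [h.reForm_smul_smul]
      linarith
    linarith [ha z ⟨⟨hzΩ, hbz⟩, subset_closure hz2⟩, min_le_left (a - 1) 3]
  · linarith [min_le_right (a - 1) 3]

theorem preimage_ball_id_add_smul_subset (hsub : h.ball ⊆ Ω)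
    {T : (Fin n → ℂ) →ₗ[ℂ] (Fin n → ℂ)} {ε M t : ℝ} (hε : 0 < ε) (ht : 0 < t)
    (hfar : ∀ z ∉ Ω, h.reForm (T z) z ≤ 0 → 1 + ε ≤ h.reForm z z)
    (hM : ∀ z, -h.reForm (T z) z ≤ M * h.reForm z z) (htM : 1 ≤ (1 + ε) * (1 - 2 * t * M)) :
    ⇑(LinearMap.id + t • T : (Fin n → ℂ) →ₗ[ℂ] (Fin n → ℂ)) ⁻¹' h.ball ⊆ Ω := by
  intro z hz
  by_contra hzΩ
  have hz : h.reForm (z + t • T z) (z + t • T z) < 1 := hz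
  rw [h.reForm_add_smul_self] at hz
  have hTz := mul_nonneg (sq_nonneg t) (h.reForm_self_nonneg (T z))
  rcases le_or_gt (h.reForm (T z) z) 0 with hb | hb
  · have hq := hfar z hzΩ hb
    have hMz := hM z
    have htM' : 0 ≤ 1 - 2 * t * M := by nlinarith
    nlinarith
  · have hq : 1 ≤ h.reForm z z := not_lt.1 fun hlt => hzΩ (hsub hlt)
    nlinarith

theorem exists_mem_frontier_inter_reForm_apply_nonpos (hΩo : IsOpen Ω) (hΩb : IsBounded Ω)
    (hsub : h.ball ⊆ Ω)
    (hmax : ∀ k : PosDefHermForm n, k.ball ⊆ Ω → volume k.ball ≤ volume h.ball)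
    {T : (Fin n → ℂ) →ₗ[ℂ] (Fin n → ℂ)} (hT : (LinearMap.trace ℂ (Fin n → ℂ) T).re < 0) :
    ∃ z ∈ frontier Ω ∩ frontier h.ball, h.reForm (T z) z ≤ 0 := by
  by_contra! hS
  obtain ⟨ε, hε, hfar⟩ := exists_forall_notMem_one_add_le_reForm hΩo hΩb hsub
    (h.continuous_reForm T.continuous_of_finiteDimensional continuous_id) hS
  obtain ⟨M, hM⟩ := h.exists_reForm_apply_le_mul (-T)
  simp only [LinearMap.neg_apply, map_neg] at hM
  set d := fun t : ℝ => LinearMap.det ((LinearMap.id + t • T).restrictScalars ℝ)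
  have hd : HasDerivAt d (2 * (LinearMap.trace ℂ (Fin n → ℂ) T).re) 0 := by
    have := (T.restrictScalars ℝ).hasDerivAt_det_id_add_smul
    rwa [LinearMap.trace_restrictScalars, Algebra.trace_complex_apply] at this
  have hd0 : d 0 = 1 := by simp [d]
  have hsmall : ∀ᶠ t in 𝓝[>] 0, 0 < t ∧ 0 < d t ∧ d t < 1 ∧ 1 < (1 + ε) * (1 - 2 * t * M) := by
    refine (eventually_mem_nhdsWithin (s := Set.Ioi 0)).and
      (Eventually.and ?_ (Eventually.and ?_ ?_))
    · exact eventually_nhdsWithin_of_eventually_nhds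
        (continuousAt_const.eventually_lt hd.continuousAt (by simp [hd0]))
    · simpa [hd0] using hd.eventually_lt_of_neg (by linarith)
    · exact eventually_nhdsWithin_of_eventually_nhds
        (continuousAt_const.eventually_lt (by fun_prop) (by simpa using hε))
  obtain ⟨t, ht, hdt_pos, hdt_lt, htM⟩ := hsmall.exists
  have := one_le_abs_det_of_preimage_ball_subset hΩb hsub hmax hdt_pos.ne'
    (preimage_ball_id_add_smul_subset hsub hε ht hfar hM htM.le)
  rw [abs_of_pos hdt_pos] at this
  linarith

end MaximalEllipsoid

/-- if `E_h` is a maximal-volume hermitian ellipsoid inscribed in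
the bounded open `Ω`, then for every linear `T`,
`Re(tr T)/n ≤ max { Re h(Tz,z) : z ∈ ∂Ω ∩ ∂E_h }`. -/
theorem maximal_ellipsoid_trace_ineq {n : ℕ} (hn : 0 < n)
    (Ω : Set (Fin n → ℂ)) (hΩo : IsOpen Ω) (hΩb : IsBounded Ω)
    (h : PosDefHermForm n) (hsub : h.ball ⊆ Ω)
    (hmax : ∀ k : PosDefHermForm n, k.ball ⊆ Ω → volume k.ball ≤ volume h.ball)
    (T : (Fin n → ℂ) →ₗ[ℂ] (Fin n → ℂ)) :
    ∃ z ∈ frontier Ω ∩ frontier h.ball,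
      (LinearMap.trace ℂ (Fin n → ℂ) T).re / n ≤ (h.form (T z) z).re := by
  have hS : IsCompact (frontier Ω ∩ frontier h.ball) :=
    Metric.isCompact_of_isClosed_isBounded (isClosed_frontier.inter isClosed_frontier)
      (hΩb.closure.subset (Set.inter_subset_left.trans frontier_subset_closure))
  obtain ⟨z₁, hz₁, -⟩ := exists_mem_frontier_inter_reForm_apply_nonpos hΩo hΩb hsub hmax
    (T := -LinearMap.id) (by simpa using hn)
  obtain ⟨z₀, hz₀, hz₀max⟩ := hS.exists_isMaxOn ⟨z₁, hz₁⟩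
    (h.continuous_reForm T.continuous_of_finiteDimensional continuous_id :
      Continuous fun z => h.reForm (T z) z).continuousOn
  refine ⟨z₀, hz₀, le_of_not_gt fun hlt => ?_⟩
  obtain ⟨μ, hμ₀, hμ⟩ := exists_between hlt
  obtain ⟨z, hz, hμz⟩ := exists_mem_frontier_inter_reForm_apply_nonpos hΩo hΩb hsub hmax
    (T := μ • LinearMap.id - T) (by
      have : μ * n < (LinearMap.trace ℂ (Fin n → ℂ) T).re := by
        rwa [← lt_div_iff₀ (Nat.cast_pos.2 hn)]
      simpa using this)
  have hqz : h.reForm z z = 1 := by simpa [h.frontier_ball] using hz.2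
  have : μ ≤ h.reForm (T z) z := by simpa [hqz] using hμz
  have : h.reForm (T z) z ≤ (h.form (T z₀) z₀).re := hz₀max hz
  linarith
end

section
/- There exists a bounded pseudoconvex domain Ω ⊂ ℂ² admitting infinitely many distinct hermitian ellipsoids (centered at 0) of maximal inscribed volume; namely Ω = {(x,y) : |xy| < 1, |x| < 3, |y| < 3}, in which E_p = {(x,y) : (p²/2)|x|² + (p⁻²/2)|y|² < 1} is maximal for every p ∈ (1/2, 2). -/
open Complex MeasureTheory Bornology

/-- The bicylinder-type domain `Ω = {(x,y) : |xy| < 1, |x| < 3, |y| < 3}`. -/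
def OmegaXY : Set (Fin 2 → ℂ) :=
  {z | ‖z 0 * z 1‖ < 1 ∧ ‖z 0‖ < 3 ∧ ‖z 1‖ < 3}

/-- The ellipsoid `E_p = {(x,y) : (p²/2)|x|² + (p⁻²/2)|y|² < 1}`. -/
def ellP (p : ℝ) : Set (Fin 2 → ℂ) :=
  {z | p^2/2 * Complex.normSq (z 0) + p⁻¹^2/2 * Complex.normSq (z 1) < 1}

/-!
`Ω` is cut out by `|xy| < 1`, `|x| < 3`, `|y| < 3`, so `∑ (Mᵢ - |fᵢ|)⁻¹` is a continuous
plurisubharmonic exhaustion: on every complex line `|fᵢ|` satisfies the sub-mean-value inequality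
by the mean value property of holomorphic functions, and `t ↦ (M - t)⁻¹` is convex and increasing.

The ellipsoid `{A|x|² + B|y|² + 2 Re(C x ȳ) < 1}` is the preimage of the unit ball under a
complex-linear map of real determinant `AB - |C|²`, so its volume is proportional to
`(AB - |C|²)⁻¹`. If it lies in `Ω`, then by homogeneity `|xy|` is bounded by the quadratic form;
testing this on the vector where the cross term is most negative gives `√(AB) - |C| ≥ 1/2`, hence
`AB - |C|² ≥ 1/4`. Every `E_p` attains `1/4`, and the `E_p` are pairwise distinct.
-/

open Metric Real Set

section CircleAverage

variable {E : Type*} [NormedAddCommGroup E]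

theorem norm_circleAverage_le [NormedSpace ℝ E] (f : ℂ → E) (c : ℂ) (R : ℝ) :
    ‖circleAverage f c R‖ ≤ circleAverage (fun z ↦ ‖f z‖) c R := by
  rw [circleAverage_def, circleAverage_def, norm_smul, smul_eq_mul,
    Real.norm_of_nonneg (by positivity)]
  gcongr
  exact intervalIntegral.norm_integral_le_integral_norm two_pi_pos.le

theorem Differentiable.norm_le_circleAverage_norm [NormedSpace ℂ E] [CompleteSpace E]
    {f : ℂ → E} (hf : Differentiable ℂ f) (c : ℂ) (R : ℝ) :
    ‖f c‖ ≤ circleAverage (fun z ↦ ‖f z‖) c R := by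
  rw [← hf.diffContOnCl.circleAverage]
  exact norm_circleAverage_le f c R

end CircleAverage

theorem inv_sub_add_le_inv_sub {M m t : ℝ} (hm : m < M) (ht : t < M) :
    (M - m)⁻¹ + (t - m) * ((M - m) ^ 2)⁻¹ ≤ (M - t)⁻¹ := by
  have h1 : 0 < M - t := sub_pos.2 ht
  have h2 : 0 < M - m := sub_pos.2 hm
  rw [← sub_nonneg]
  have : (M - t)⁻¹ - ((M - m)⁻¹ + (t - m) * ((M - m) ^ 2)⁻¹)
      = (t - m) ^ 2 / ((M - t) * (M - m) ^ 2) := by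
    field_simp
    ring
  rw [this]
  positivity

theorem inv_sub_le_circleAverage_inv_sub {φ : ℂ → ℝ} {c : ℂ} {R M : ℝ}
    (hφ : ContinuousOn φ (sphere c |R|)) (hlt : ∀ z ∈ sphere c |R|, φ z < M) (hc : φ c < M)
    (hmean : φ c ≤ circleAverage φ c R) :
    (M - φ c)⁻¹ ≤ circleAverage (fun z ↦ (M - φ z)⁻¹) c R := by
  have hφi : CircleIntegrable φ c R := hφ.circleIntegrable'
  have hinv : CircleIntegrable (fun z ↦ (M - φ z)⁻¹) c R :=
    ((continuousOn_const.sub hφ).inv₀ fun z hz ↦ (sub_pos.2 (hlt z hz)).ne').circleIntegrable'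
  have hlin : CircleIntegrable (fun z ↦ ((M - φ c) ^ 2)⁻¹ • (φ z - φ c)) c R :=
    (hφi.sub (circleIntegrable_const _ c R)).const_smul
  have hconst := circleIntegrable_const (M - φ c)⁻¹ c R
  -- Average the tangent line of the convex function `t ↦ (M - t)⁻¹` at `φ c`.
  calc (M - φ c)⁻¹
      ≤ (M - φ c)⁻¹ + ((M - φ c) ^ 2)⁻¹ • (circleAverage φ c R - φ c) :=
        le_add_of_nonneg_right (smul_nonneg (by positivity) (sub_nonneg.2 hmean))
    _ = circleAverage (fun z ↦ (M - φ c)⁻¹ + ((M - φ c) ^ 2)⁻¹ • (φ z - φ c)) c R := by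
        rw [circleAverage_fun_add hconst hlin, circleAverage_fun_smul,
          circleAverage_fun_sub hφi (circleIntegrable_const _ c R), circleAverage_const,
          circleAverage_const]
    _ ≤ circleAverage (fun z ↦ (M - φ z)⁻¹) c R :=
        circleAverage_mono (hconst.add hlin) hinv fun z hz ↦ by
          simpa [smul_eq_mul, mul_comm] using inv_sub_add_le_inv_sub hc (hlt z hz)

def analyticPolyhedron {n : ℕ} {ι : Type*} (f : ι → (Fin n → ℂ) → ℂ) (M : ι → ℝ) :
    Set (Fin n → ℂ) :=
  {z | ∀ i, ‖f i z‖ < M i}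

noncomputable def analyticPolyhedron.exhaustion {n : ℕ} {ι : Type*} [Fintype ι]
    (f : ι → (Fin n → ℂ) → ℂ) (M : ι → ℝ) (z : Fin n → ℂ) : ℝ :=
  ∑ i, (M i - ‖f i z‖)⁻¹

namespace analyticPolyhedron

variable {n : ℕ} {ι : Type*} [Fintype ι] {f : ι → (Fin n → ℂ) → ℂ} {M : ι → ℝ}

theorem isOpen (hf : ∀ i, Continuous (f i)) : IsOpen (analyticPolyhedron f M) := by
  simp only [analyticPolyhedron, ofPred_forall]
  exact isOpen_iInter_of_finite fun i ↦ isOpen_lt (hf i).norm continuous_const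

theorem continuousOn_exhaustion (hf : ∀ i, Continuous (f i)) :
    ContinuousOn (exhaustion f M) (analyticPolyhedron f M) :=
  continuousOn_finsetSum _ fun i _ ↦ (continuousOn_const.sub (hf i).norm.continuousOn).inv₀
    fun _ hz ↦ (sub_pos.2 (hz i)).ne'

theorem plurisubharmonicOn_exhaustion (hf : ∀ i, Differentiable ℂ (f i)) :
    PlurisubharmonicOn (exhaustion f M) (analyticPolyhedron f M) := by
  intro a b r hr hline
  have hsphere : ∀ w ∈ sphere (0 : ℂ) |r|, a + w • b ∈ analyticPolyhedron f M := fun w hw ↦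
    hline w (by rw [mem_sphere_zero_iff_norm, abs_of_pos hr] at hw; exact hw.le)
  have ha : a ∈ analyticPolyhedron f M := by simpa using hline 0 (by simpa using hr.le)
  have hg : ∀ i, Differentiable ℂ fun w : ℂ ↦ f i (a + w • b) := fun i ↦
    (hf i).comp (by fun_prop)
  have hterm : ∀ i, CircleIntegrable (fun w ↦ (M i - ‖f i (a + w • b)‖)⁻¹) 0 r := fun i ↦
    ((continuousOn_const.sub (hg i).continuous.norm.continuousOn).inv₀
      fun w hw ↦ (sub_pos.2 (hsphere w hw i)).ne').circleIntegrable'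
  have hmean : ∀ i, (M i - ‖f i a‖)⁻¹ ≤
      circleAverage (fun w ↦ (M i - ‖f i (a + w • b)‖)⁻¹) 0 r := fun i ↦ by
    simpa using inv_sub_le_circleAverage_inv_sub (φ := fun w ↦ ‖f i (a + w • b)‖)
      (hg i).continuous.norm.continuousOn (fun w hw ↦ hsphere w hw i) (by simpa using ha i)
      (by simpa using (hg i).norm_le_circleAverage_norm 0 r)
  calc exhaustion f M a ≤ ∑ i, circleAverage (fun w ↦ (M i - ‖f i (a + w • b)‖)⁻¹) 0 r :=
        Finset.sum_le_sum fun i _ ↦ hmean i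
    _ = circleAverage (fun w ↦ exhaustion f M (a + w • b)) 0 r :=
        (circleAverage_fun_sum fun i _ ↦ hterm i).symm
    _ = _ := by simp [circleAverage_def, circleMap]

/-- On a sublevel set every summand is at most `c`, so each constraint holds with a margin. -/
theorem isCompact_sublevel_exhaustion (hf : ∀ i, Continuous (f i))
    (hb : IsBounded (analyticPolyhedron f M)) (c : ℝ) :
    IsCompact {z | z ∈ analyticPolyhedron f M ∧ exhaustion f M z ≤ c} := by
  set K := {z | ∀ i, ‖f i z‖ ≤ M i - (max c 1)⁻¹}
  have hKP : K ⊆ analyticPolyhedron f M := fun z hz i ↦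
    (hz i).trans_lt (sub_lt_self _ (by positivity))
  have hK : IsClosed K := by
    simp only [K, ofPred_forall]
    exact isClosed_iInter fun i ↦ isClosed_le (hf i).norm continuous_const
  have hsub : ∀ z ∈ analyticPolyhedron f M, exhaustion f M z ≤ c → z ∈ K := by
    intro z hz hu i
    have hpos : ∀ j, 0 < (M j - ‖f j z‖)⁻¹ := fun j ↦ inv_pos.2 (sub_pos.2 (hz j))
    have hi : (M i - ‖f i z‖)⁻¹ ≤ max c 1 :=
      (Finset.single_le_sum (fun j _ ↦ (hpos j).le) (Finset.mem_univ i)).trans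
        (hu.trans (le_max_left _ _))
    have := inv_anti₀ (hpos i) hi
    rw [inv_inv] at this
    linarith
  have heq : {z | z ∈ analyticPolyhedron f M ∧ exhaustion f M z ≤ c} =
      K ∩ exhaustion f M ⁻¹' Iic c :=
    Set.ext fun z ↦ ⟨fun h ↦ ⟨hsub z h.1 h.2, h.2⟩, fun h ↦ ⟨hKP h.1, h.2⟩⟩
  rw [heq]
  exact isCompact_of_isClosed_isBounded
    (((continuousOn_exhaustion hf).mono hKP).preimage_isClosed_of_isClosed hK isClosed_Iic)
    (hb.subset (inter_subset_left.trans hKP))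

theorem isPseudoconvex (hf : ∀ i, Differentiable ℂ (f i))
    (hb : IsBounded (analyticPolyhedron f M)) :
    IsPseudoconvex (analyticPolyhedron f M) :=
  ⟨isOpen fun i ↦ (hf i).continuous, exhaustion f M,
    continuousOn_exhaustion fun i ↦ (hf i).continuous, plurisubharmonicOn_exhaustion hf,
    isCompact_sublevel_exhaustion (fun i ↦ (hf i).continuous) hb⟩

end analyticPolyhedron

theorem omegaXY_eq_analyticPolyhedron :
    OmegaXY = analyticPolyhedron ![fun z ↦ z 0 * z 1, fun z ↦ z 0, fun z ↦ z 1] ![1, 3, 3] := by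
  ext z
  simp [OmegaXY, analyticPolyhedron, Fin.forall_fin_succ]

theorem isBounded_omegaXY : IsBounded OmegaXY := by
  refine isBounded_iff_forall_norm_le.2
    ⟨3, fun z hz ↦ (pi_norm_le_iff_of_nonneg (by norm_num)).2 fun i ↦ ?_⟩
  fin_cases i
  exacts [hz.2.1.le, hz.2.2.le]

theorem isPseudoconvex_omegaXY : IsPseudoconvex OmegaXY := by
  rw [omegaXY_eq_analyticPolyhedron]
  refine analyticPolyhedron.isPseudoconvex (fun i ↦ ?_)
    (omegaXY_eq_analyticPolyhedron ▸ isBounded_omegaXY)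
  fin_cases i <;> simp <;> fun_prop

theorem starConvex_omegaXY : StarConvex ℝ 0 OmegaXY := by
  intro z ⟨hz, hz0, hz1⟩ s t _ ht hst
  have ht1 : ‖t‖ ≤ 1 := by rw [Real.norm_of_nonneg ht]; linarith
  simp only [smul_zero, zero_add, OmegaXY, Set.mem_ofPred_eq, Pi.smul_apply, smul_mul_smul,
    norm_smul]
  refine ⟨?_, ?_, ?_⟩
  · have htt : ‖t * t‖ ≤ 1 := by rw [norm_mul]; nlinarith [norm_nonneg t]
    exact (mul_le_of_le_one_left (norm_nonneg _) htt).trans_lt hz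
  · exact (mul_le_of_le_one_left (norm_nonneg _) ht1).trans_lt hz0
  · exact (mul_le_of_le_one_left (norm_nonneg _) ht1).trans_lt hz1

theorem isConnected_omegaXY : IsConnected OmegaXY :=
  (starConvex_omegaXY.isPathConnected (by simp [OmegaXY])).isConnected

open ComplexConjugate

def hermQuad (A B : ℝ) (C : ℂ) (z : Fin 2 → ℂ) : ℝ :=
  A * normSq (z 0) + B * normSq (z 1) + 2 * (C * z 0 * conj (z 1)).re

section hermQuad

variable {A B : ℝ} {C : ℂ}

theorem hermQuad_smul (A B : ℝ) (C : ℂ) (t : ℝ) (z : Fin 2 → ℂ) :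
    hermQuad A B C (t • z) = t ^ 2 * hermQuad A B C z := by
  simp only [hermQuad, Pi.smul_apply, Complex.real_smul, map_mul, Complex.normSq_ofReal,
    Complex.conj_ofReal]
  rw [show C * (t * z 0) * (t * conj (z 1)) = ((t ^ 2 : ℝ) : ℂ) * (C * z 0 * conj (z 1)) by
    push_cast; ring, Complex.re_ofReal_mul]
  ring

theorem normSq_add_normSq_eq_hermQuad {s : ℝ} (hs : s ≠ 0) (t : ℝ) (C : ℂ) (z : Fin 2 → ℂ) :
    normSq (s * z 0 + conj C / s * z 1) + normSq (t * z 1) =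
      hermQuad (s ^ 2) (normSq C / s ^ 2 + t ^ 2) C z := by
  simp only [hermQuad, Complex.normSq_apply, Complex.add_re, Complex.add_im, Complex.mul_re,
    Complex.mul_im, Complex.div_re, Complex.div_im, Complex.ofReal_re, Complex.ofReal_im,
    Complex.conj_re, Complex.conj_im]
  field_simp
  ring

theorem volume_setOf_hermQuad_lt (hA : 0 < A) (hd : 0 < A * B - normSq C) :
    volume {z | hermQuad A B C z < 1} = ENNReal.ofReal (A * B - normSq C)⁻¹ *
      volume {z : Fin 2 → ℂ | normSq (z 0) + normSq (z 1) < 1} := by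
  set s := √A
  set t := √((A * B - normSq C) / A)
  have hs : s ^ 2 = A := Real.sq_sqrt hA.le
  have ht : t ^ 2 = (A * B - normSq C) / A := Real.sq_sqrt (by positivity)
  have hs0 : s ≠ 0 := (Real.sqrt_pos.2 hA).ne'
  set T : (Fin 2 → ℂ) →ₗ[ℂ] (Fin 2 → ℂ) := Matrix.toLin' !![(s : ℂ), conj C / s; 0, (t : ℂ)]
  have hdet : LinearMap.det (T.restrictScalars ℝ) = A * B - normSq C := by
    rw [LinearMap.det_restrictScalars, LinearMap.det_toLin', Matrix.det_fin_two_of,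
      Algebra.norm_complex_apply, mul_zero, sub_zero, ← Complex.ofReal_mul,
      Complex.normSq_ofReal, ← sq, mul_pow, hs, ht]
    field_simp
  have hT : ∀ z, normSq (T z 0) + normSq (T z 1) = hermQuad A B C z := fun z ↦ by
    have hB : normSq C / A + t ^ 2 = B := by rw [ht]; field_simp; ring
    have := normSq_add_normSq_eq_hermQuad hs0 t C z
    rw [hs, hB] at this
    simpa [T, Matrix.mulVec, dotProduct, Fin.sum_univ_two] using this
  have hset : {z | hermQuad A B C z < 1} =
      T.restrictScalars ℝ ⁻¹' {z | normSq (z 0) + normSq (z 1) < 1} := by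
    ext z
    simp only [Set.mem_preimage, mem_ofPred_eq, LinearMap.coe_restrictScalars, hT]
  rw [hset, MeasureTheory.Measure.addHaar_preimage_linearMap _ (hdet ▸ hd.ne'), hdet,
    abs_of_pos (inv_pos.2 hd)]

/-- Both sides are homogeneous of degree two, so the inclusion of sublevel sets at height one
propagates to all of `ℂ²`. -/
theorem norm_mul_le_hermQuad_of_subset
    (hsub : {z | hermQuad A B C z < 1} ⊆ {z : Fin 2 → ℂ | ‖z 0 * z 1‖ < 1}) {z : Fin 2 → ℂ}
    (hz : z 0 * z 1 ≠ 0) : ‖z 0 * z 1‖ ≤ hermQuad A B C z := by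
  by_contra! h
  set N := ‖z 0 * z 1‖
  have hN : 0 < N := norm_pos_iff.2 hz
  set τ := (√N)⁻¹
  have hτ : τ ^ 2 * N = 1 := by rw [inv_pow, Real.sq_sqrt hN.le, inv_mul_cancel₀ hN.ne']
  have hmem := hsub (show τ • z ∈ {z | hermQuad A B C z < 1} by
    rw [mem_ofPred_eq, hermQuad_smul, ← hτ]
    exact mul_lt_mul_of_pos_left h (by positivity))
  have : ‖(τ • z) 0 * (τ • z) 1‖ = τ ^ 2 * N := by
    simp only [Pi.smul_apply, smul_mul_smul, norm_smul, Real.norm_eq_abs, abs_mul_self, N, sq]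
  exact (this.trans hτ ▸ hmem : (1 : ℝ) < 1).false

theorem exists_norm_eq_one_mul_eq_neg_norm (C : ℂ) : ∃ ω : ℂ, ‖ω‖ = 1 ∧ C * ω = -‖C‖ := by
  refine ⟨-Complex.exp (↑(-arg C) * Complex.I),
    by rw [norm_neg, Complex.norm_exp_ofReal_mul_I], ?_⟩
  rw [mul_neg, neg_inj]
  nth_rewrite 1 [← Complex.norm_mul_exp_arg_mul_I C]
  rw [mul_assoc, ← Complex.exp_add, Complex.ofReal_neg, neg_mul, add_neg_cancel,
    Complex.exp_zero, mul_one]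

theorem quarter_le_of_hermQuad_subset (hA : 0 < A) (hB : 0 < B)
    (hsub : {z | hermQuad A B C z < 1} ⊆ {z : Fin 2 → ℂ | ‖z 0 * z 1‖ < 1}) :
    1 / 4 ≤ A * B - normSq C := by
  obtain ⟨ω, hω, hCω⟩ := exists_norm_eq_one_mul_eq_neg_norm C
  set P := √A * √B
  have hP : P ^ 2 = A * B := by rw [mul_pow, Real.sq_sqrt hA.le, Real.sq_sqrt hB.le]
  have hP0 : 0 < P := by positivity
  -- On this vector the cross term is as negative as possible, while `|z₀ z₁| = √(AB)`.
  set w : Fin 2 → ℂ := ![√B * ω, √A]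
  have hw : ‖w 0 * w 1‖ = P := by
    simp [w, P, hω, abs_of_nonneg, Real.sqrt_nonneg, mul_comm]
  have hq : hermQuad A B C w = 2 * A * B - 2 * ‖C‖ * P := by
    have : C * w 0 * conj (w 1) = ((-(‖C‖ * P) : ℝ) : ℂ) := by
      simp only [w, Matrix.cons_val_zero, Matrix.cons_val_one, Complex.conj_ofReal]
      rw [show C * (√B * ω) * √A = C * ω * (P : ℂ) by push_cast [P]; ring, hCω]
      push_cast
      ring
    simp only [hermQuad, this, Complex.ofReal_re]
    simp [w, map_mul, Complex.normSq_ofReal, Complex.normSq_eq_norm_sq ω, hω,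
      Real.mul_self_sqrt hA.le, Real.mul_self_sqrt hB.le]
    ring
  have hne : w 0 * w 1 ≠ 0 := by rw [← norm_pos_iff, hw]; exact hP0
  have key := norm_mul_le_hermQuad_of_subset hsub hne
  rw [hw, hq] at key
  have hgap : 1 / 2 ≤ P - ‖C‖ := by nlinarith
  rw [Complex.normSq_eq_norm_sq, ← hP]
  nlinarith [norm_nonneg C]

end hermQuad

namespace PosDefHermForm

section General

variable {n : ℕ} (k : PosDefHermForm n)

def gram (i j : Fin n) : ℂ :=
  k.form (Pi.single i 1) (Pi.single j 1)

theorem form_add_right (z w w' : Fin n → ℂ) : k.form z (w + w') = k.form z w + k.form z w' := by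
  rw [k.conj_symm z (w + w'), k.add_left, map_add, ← k.conj_symm, ← k.conj_symm]

theorem form_smul_right (a : ℂ) (z w : Fin n → ℂ) : k.form z (a • w) = conj a * k.form z w := by
  rw [k.conj_symm z (a • w), k.smul_left, map_mul, ← k.conj_symm]

theorem ofReal_re_form_self (z : Fin n → ℂ) : ((k.form z z).re : ℂ) = k.form z z :=
  Complex.conj_eq_iff_re.1 (k.conj_symm z z).symm

theorem gram_pos (i : Fin n) : 0 < (k.gram i i).re :=
  k.posdef _ (by simp)

end General

variable (k : PosDefHermForm 2)

def gramDet : ℝ :=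
  (k.gram 0 0).re * (k.gram 1 1).re - normSq (k.gram 0 1)

theorem re_form_self_eq_hermQuad (z : Fin 2 → ℂ) :
    (k.form z z).re = hermQuad (k.gram 0 0).re (k.gram 1 1).re (k.gram 0 1) z := by
  have hz : z = z 0 • Pi.single 0 1 + z 1 • Pi.single 1 1 := by
    ext i; fin_cases i <;> simp
  have h10 : k.gram 1 0 = conj (k.gram 0 1) := k.conj_symm _ _
  have hexp : k.form z z = z 0 * conj (z 0) * ((k.gram 0 0).re : ℂ)
      + z 1 * conj (z 1) * ((k.gram 1 1).re : ℂ)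
      + (k.gram 0 1 * z 0 * conj (z 1) + conj (k.gram 0 1 * z 0 * conj (z 1))) := by
    conv_lhs => rw [hz]
    simp only [k.add_left, k.smul_left, k.form_add_right, k.form_smul_right]
    simp only [gram] at h10 ⊢
    rw [k.ofReal_re_form_self, k.ofReal_re_form_self, h10, map_mul, map_mul, Complex.conj_conj]
    ring
  rw [hexp, hermQuad, Complex.add_re, Complex.add_conj, Complex.ofReal_re, Complex.add_re,
    Complex.mul_conj, Complex.mul_conj, ← Complex.ofReal_mul, ← Complex.ofReal_mul,
    Complex.ofReal_re, Complex.ofReal_re]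
  ring

theorem ball_eq_setOf_hermQuad :
    k.ball = {z | hermQuad (k.gram 0 0).re (k.gram 1 1).re (k.gram 0 1) z < 1} := by
  ext z
  simp only [ball, mem_ofPred_eq, re_form_self_eq_hermQuad]

theorem gramDet_pos : 0 < k.gramDet := by
  set A := (k.gram 0 0).re
  have hv : (![-conj (k.gram 0 1), (A : ℂ)] : Fin 2 → ℂ) ≠ 0 := fun h ↦
    (k.gram_pos 0).ne' (by simpa using congr_fun h 1)
  have hpos := k.posdef _ hv
  rw [re_form_self_eq_hermQuad] at hpos
  have : hermQuad A (k.gram 1 1).re (k.gram 0 1) ![-conj (k.gram 0 1), (A : ℂ)] =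
      A * k.gramDet := by
    simp only [hermQuad, gramDet, Matrix.cons_val_zero, Matrix.cons_val_one, Complex.conj_ofReal,
      Complex.normSq_neg, Complex.normSq_conj, Complex.normSq_ofReal, mul_neg, neg_mul]
    rw [Complex.mul_conj, ← Complex.ofReal_mul, ← Complex.ofReal_neg, Complex.ofReal_re]
    ring
  exact pos_of_mul_pos_right (this ▸ hpos) (k.gram_pos 0).le

theorem volume_ball : volume k.ball = ENNReal.ofReal k.gramDet⁻¹ *
    volume {z : Fin 2 → ℂ | normSq (z 0) + normSq (z 1) < 1} := by
  rw [ball_eq_setOf_hermQuad]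
  exact volume_setOf_hermQuad_lt (k.gram_pos 0) k.gramDet_pos

theorem quarter_le_gramDet (hk : k.ball ⊆ OmegaXY) : 1 / 4 ≤ k.gramDet :=
  quarter_le_of_hermQuad_subset (k.gram_pos 0) (k.gram_pos 1)
    (k.ball_eq_setOf_hermQuad ▸ hk.trans fun _ hz ↦ hz.1)

def IsMaxVolumeIn {n : ℕ} (h : PosDefHermForm n) (Ω : Set (Fin n → ℂ)) : Prop :=
  h.ball ⊆ Ω ∧ ∀ k : PosDefHermForm n, k.ball ⊆ Ω → volume k.ball ≤ volume h.ball

def diag (a b : ℝ) (ha : 0 < a) (hb : 0 < b) : PosDefHermForm 2 where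
  form z w := a * (z 0 * conj (w 0)) + b * (z 1 * conj (w 1))
  add_left z z' w := by simp only [Pi.add_apply]; ring
  smul_left c z w := by simp only [Pi.smul_apply, smul_eq_mul]; ring
  conj_symm z w := by simp only [map_add, map_mul, Complex.conj_conj, Complex.conj_ofReal]; ring
  posdef z hz := by
    simp only [Complex.add_re, Complex.mul_conj, ← Complex.ofReal_mul, Complex.ofReal_re]
    have : z 0 ≠ 0 ∨ z 1 ≠ 0 := by
      by_contra! h
      exact hz (funext fun i ↦ by fin_cases i <;> simp [h.1, h.2])
    rcases this with h | h
    · nlinarith [Complex.normSq_pos.2 h, Complex.normSq_nonneg (z 1)]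
    · nlinarith [Complex.normSq_pos.2 h, Complex.normSq_nonneg (z 0)]

variable {a b : ℝ} (ha : 0 < a) (hb : 0 < b)

theorem diag_ball : (diag a b ha hb).ball = {z | a * normSq (z 0) + b * normSq (z 1) < 1} := by
  ext z
  simp [ball, diag, Complex.mul_conj, ← Complex.ofReal_mul]

theorem diag_gramDet : (diag a b ha hb).gramDet = a * b := by
  simp [gramDet, gram, diag]

end PosDefHermForm

open PosDefHermForm

theorem ellP_eq_diag_ball {p : ℝ} (hp : p ≠ 0) :
    ellP p = (diag (p ^ 2 / 2) (p⁻¹ ^ 2 / 2) (by positivity) (by positivity)).ball := by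
  rw [diag_ball]; rfl

theorem ellP_subset_omegaXY {p : ℝ} (hp1 : 1 / 2 < p) (hp2 : p < 2) : ellP p ⊆ OmegaXY := by
  have hp : 0 < p := by linarith
  have hpq : p * p⁻¹ = 1 := mul_inv_cancel₀ hp.ne'
  have hq1 : 1 / 2 < p⁻¹ := by rw [lt_inv_comm₀ (by norm_num) hp]; linarith
  intro z hz
  have hz : p ^ 2 / 2 * ‖z 0‖ ^ 2 + p⁻¹ ^ 2 / 2 * ‖z 1‖ ^ 2 < 1 := by
    simpa [ellP, Complex.normSq_eq_norm_sq] using hz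
  have h0 := norm_nonneg (z 0)
  have h1 := norm_nonneg (z 1)
  refine ⟨?_, ?_, ?_⟩
  · rw [norm_mul]
    nlinarith [sq_nonneg (p * ‖z 0‖ - p⁻¹ * ‖z 1‖)]
  · nlinarith [mul_le_mul_of_nonneg_right hp1.le h0, sq_nonneg (p⁻¹ * ‖z 1‖)]
  · nlinarith [mul_le_mul_of_nonneg_right hq1.le h1, sq_nonneg (p * ‖z 0‖)]

theorem exists_ball_eq_ellP_isMaxVolumeIn {p : ℝ} (hp1 : 1 / 2 < p) (hp2 : p < 2) :
    ∃ h : PosDefHermForm 2, h.ball = ellP p ∧ h.IsMaxVolumeIn OmegaXY := by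
  have hp : p ≠ 0 := by positivity
  refine ⟨_, (ellP_eq_diag_ball hp).symm, ellP_eq_diag_ball hp ▸ ellP_subset_omegaXY hp1 hp2,
    fun k hk ↦ ?_⟩
  have hdet : p ^ 2 / 2 * (p⁻¹ ^ 2 / 2) = 1 / 4 := by field_simp; norm_num
  rw [k.volume_ball, PosDefHermForm.volume_ball, diag_gramDet, hdet]
  gcongr
  exact k.quarter_le_gramDet hk

theorem vec_mem_ellP_iff (p x : ℝ) :
    (![(x : ℂ), 0] : Fin 2 → ℂ) ∈ ellP p ↔ p ^ 2 / 2 * x ^ 2 < 1 := by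
  simp [ellP, sq]

theorem ellP_ne_of_lt {p q : ℝ} (hp : 0 < p) (hpq : p < q) : ellP p ≠ ellP q := by
  intro h
  have hq : 0 < q := hp.trans hpq
  -- `(√2 / q, 0)` lies on the boundary of `E_q` but inside `E_p`.
  have hx : (√2 / q) ^ 2 = 2 / q ^ 2 := by rw [div_pow, Real.sq_sqrt zero_le_two]
  have hmem := (vec_mem_ellP_iff p (√2 / q)).2 <| by
    rw [hx, show p ^ 2 / 2 * (2 / q ^ 2) = (p / q) ^ 2 by field_simp]
    exact pow_lt_one₀ (by positivity) ((div_lt_one hq).2 hpq) two_ne_zero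
  rw [h, vec_mem_ellP_iff, hx, show q ^ 2 / 2 * (2 / q ^ 2) = 1 by field_simp] at hmem
  exact hmem.false

theorem injOn_ellP : InjOn ellP (Ioi 0) := by
  intro p hp q hq h
  by_contra hne
  rcases lt_or_gt_of_ne hne with hlt | hlt
  exacts [ellP_ne_of_lt hp hlt h, ellP_ne_of_lt hq hlt h.symm]

/-- Proposition 4.3: `Ω` is a bounded pseudoconvex domain in
which each `E_p`, `1/2 < p < 2`, is a maximal hermitian ellipsoid; in
particular `Ω` admits infinitely many maximal ellipsoids. -/
theorem infinitely_many_maximal_ellipsoids :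
    IsPseudoconvex OmegaXY ∧ IsBounded OmegaXY ∧ IsConnected OmegaXY ∧
    (∀ p : ℝ, 1/2 < p → p < 2 → ∃ h : PosDefHermForm 2, h.ball = ellP p ∧
      h.ball ⊆ OmegaXY ∧
      ∀ k : PosDefHermForm 2, k.ball ⊆ OmegaXY → volume k.ball ≤ volume h.ball) ∧
    {E : Set (Fin 2 → ℂ) | ∃ h : PosDefHermForm 2, E = h.ball ∧ E ⊆ OmegaXY ∧
      ∀ k : PosDefHermForm 2, k.ball ⊆ OmegaXY →
        volume k.ball ≤ volume h.ball}.Infinite := by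
  refine ⟨isPseudoconvex_omegaXY, isBounded_omegaXY, isConnected_omegaXY,
    fun p hp1 hp2 ↦ exists_ball_eq_ellP_isMaxVolumeIn hp1 hp2, ?_⟩
  have hinf : (ellP '' Ioo (1 / 2) 2).Infinite :=
    (Ioo_infinite (by norm_num)).image (injOn_ellP.mono fun _ hp ↦ one_half_pos.trans hp.1)
  refine hinf.mono ?_
  rintro _ ⟨p, hp, rfl⟩
  obtain ⟨h, hball, hmax⟩ := exists_ball_eq_ellP_isMaxVolumeIn hp.1 hp.2
  exact ⟨h, hball.symm, hball ▸ hmax⟩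
end
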